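/- Let R ≥ 1 be real, let w ∈ ℂ with |w| ≤ R, and let x be a real number with |x| ≤ 1/2. Then |(1+x)^w − 1 − w·x| ≤ |w|·x²·e^{2R}. -/

import Mathlib

open Complex

lemma Complex.norm_exp_sub_one_sub_self_le_sq_mul_exp (z : ℂ) :
    ‖exp z - 1 - z‖ ≤ ‖z‖ ^ 2 * Real.exp ‖z‖ := by
  simpa [Finset.sum_range_succ, sub_sub] using norm_exp_sub_sum_le_norm_mul_exp z 2

lemma Complex.norm_log_one_add_sub_self_le_sq {z : ℂ} (hz : ‖z‖ ≤ 1 / 2) :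
    ‖log (1 + z) - z‖ ≤ ‖z‖ ^ 2 := by
  have hinv : (1 - ‖z‖)⁻¹ ≤ 2 := by
    rw [inv_le_comm₀ (by linarith) two_pos]
    linarith
  calc ‖log (1 + z) - z‖ ≤ ‖z‖ ^ 2 * (1 - ‖z‖)⁻¹ / 2 :=
        norm_log_one_add_sub_self_le (by linarith)
    _ ≤ ‖z‖ ^ 2 * 2 / 2 := by gcongr
    _ = ‖z‖ ^ 2 := by ring

/-- Writing `(1 + z) ^ w = exp (w L)` with `L = log (1 + z)`, the error splits as
`(exp (w L) - 1 - w L) + w (L - z)`, and `‖L‖ ≤ 3/2 ‖z‖ ≤ 3/4` controls the first part. -/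
lemma Complex.norm_one_add_cpow_sub_one_sub_mul_le {z : ℂ} (hz : ‖z‖ ≤ 1 / 2) (w : ℂ) :
    ‖(1 + z) ^ w - 1 - w * z‖ ≤
      ‖w‖ * ‖z‖ ^ 2 * (9 / 4 * ‖w‖ * Real.exp (3 / 4 * ‖w‖) + 1) := by
  set L := log (1 + z)
  have hne : 1 + z ≠ 0 := by
    intro h
    rw [← neg_eq_of_add_eq_zero_right h, norm_neg, norm_one] at hz
    norm_num at hz
  have hL : ‖L‖ ≤ 3 / 2 * ‖z‖ := norm_log_one_add_half_le_self hz
  have hLw : ‖L * w‖ ≤ 3 / 2 * ‖z‖ * ‖w‖ := by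
    rw [norm_mul]; gcongr
  have hLw' : ‖L * w‖ ≤ 3 / 4 * ‖w‖ := hLw.trans (by gcongr; linarith)
  have hsplit : (1 + z) ^ w - 1 - w * z = (exp (L * w) - 1 - L * w) + w * (L - z) := by
    rw [cpow_def_of_ne_zero hne]; ring
  calc ‖(1 + z) ^ w - 1 - w * z‖
      ≤ ‖exp (L * w) - 1 - L * w‖ + ‖w‖ * ‖L - z‖ := by
        rw [hsplit, ← norm_mul]; exact norm_add_le _ _
    _ ≤ ‖L * w‖ ^ 2 * Real.exp ‖L * w‖ + ‖w‖ * ‖z‖ ^ 2 := by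
        gcongr
        · exact norm_exp_sub_one_sub_self_le_sq_mul_exp _
        · exact norm_log_one_add_sub_self_le_sq hz
    _ ≤ (3 / 2 * ‖z‖ * ‖w‖) ^ 2 * Real.exp (3 / 4 * ‖w‖) + ‖w‖ * ‖z‖ ^ 2 := by
        gcongr
    _ = ‖w‖ * ‖z‖ ^ 2 * (9 / 4 * ‖w‖ * Real.exp (3 / 4 * ‖w‖) + 1) := by ring

/-- Uses `e R ≤ exp R` and `e > 2.7`, so that `9/4 R exp R ≤ 0.84 exp (2R)`. -/
lemma Real.nine_fourths_mul_exp_add_one_le_exp_two_mul {a R : ℝ} (hR : 1 ≤ R) (ha : a ≤ R) :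
    9 / 4 * a * Real.exp (3 / 4 * a) + 1 ≤ Real.exp (2 * R) := by
  have hRe : Real.exp 1 * R ≤ Real.exp R := Real.exp_one_mul_le_exp
  have he : 2.7182818283 < Real.exp 1 := Real.exp_one_gt_d9
  have hE : Real.exp 1 ≤ Real.exp R := Real.exp_le_exp.2 hR
  calc 9 / 4 * a * Real.exp (3 / 4 * a) + 1 ≤ 9 / 4 * R * Real.exp R + 1 := by
        gcongr; linarith
    _ ≤ Real.exp R * Real.exp R := by
        nlinarith [mul_le_mul_of_nonneg_right hRe (Real.exp_pos R).le]
    _ = Real.exp (2 * R) := by rw [two_mul, Real.exp_add]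

theorem cpow_one_add_sub_linear_bound (R : ℝ) (hR : 1 ≤ R) (w : ℂ) (hw : ‖w‖ ≤ R)
    (x : ℝ) (hx : |x| ≤ 1 / 2) :
    ‖(((1 + x : ℝ) : ℂ) ^ w) - 1 - w * x‖ ≤
      ‖w‖ * x ^ 2 * Real.exp (2 * R) := by
  have hx' : ‖(x : ℂ)‖ ≤ 1 / 2 := by rwa [norm_real, Real.norm_eq_abs]
  calc ‖(((1 + x : ℝ) : ℂ) ^ w) - 1 - w * x‖
      = ‖(1 + (x : ℂ)) ^ w - 1 - w * x‖ := by push_cast; rfl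
    _ ≤ ‖w‖ * ‖(x : ℂ)‖ ^ 2 * (9 / 4 * ‖w‖ * Real.exp (3 / 4 * ‖w‖) + 1) :=
        norm_one_add_cpow_sub_one_sub_mul_le hx' w
    _ ≤ ‖w‖ * x ^ 2 * Real.exp (2 * R) := by
        rw [norm_real, Real.norm_eq_abs, sq_abs]
        gcongr
        exact Real.nine_fourths_mul_exp_add_one_le_exp_two_mul hR hw
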